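/- arXiv:2602.11324 — 4 statements merged into one kernel-verified Lean document; each statement's English description precedes it below -/
import Mathlib

section
/- For every string T of length n over an alphabet [0..σ) and every integer τ with 1 ≤ τ ≤ ⌊n/2⌋, there exists a τ-synchronizing set Sync of T such that |Sync| < 70n/τ and, moreover, per(T[i..i+2τ)) > τ/3 holds for every i ∈ Sync. -/
namespace SyncFormal

/-- The fragment `T[i..j)` of a string `T`. -/
def frag {α : Type*} (T : List α) (i j : ℕ) : List α :=
  (T.drop i).take (j - i)

/-- `p` is a period of the string `S`. -/
def IsPeriod {α : Type*} (S : List α) (p : ℕ) : Prop :=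
  1 ≤ p ∧ p ≤ S.length ∧ ∀ i : ℕ, i + p < S.length → S[i]? = S[i + p]?

/-- `per S`: the smallest period of `S`. -/
noncomputable def per {α : Type*} (S : List α) : ℕ :=
  sInf {p | IsPeriod S p}

/-- `Sync` is a `τ`-synchronizing set of `T`. -/
def IsSyncSet {α : Type*} (T : List α) (τ : ℕ) (Sync : Set ℕ) : Prop :=
  (∀ i ∈ Sync, i + 2 * τ ≤ T.length) ∧
  (∀ i j : ℕ, i + 2 * τ ≤ T.length → j + 2 * τ ≤ T.length → i ∈ Sync →
    frag T i (i + 2 * τ) = frag T j (j + 2 * τ) → j ∈ Sync) ∧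
  (∀ i : ℕ, i + 3 * τ ≤ T.length + 1 →
    (Set.Ico i (i + τ) ∩ Sync = ∅ ↔ 3 * per (frag T i (i + 3 * τ - 1)) ≤ τ))

/-- `T[b..e)` is a run (maximal repetition) in `T`. -/
def IsRun {α : Type*} (T : List α) (b e : ℕ) : Prop :=
  b < e ∧ e ≤ T.length ∧
  2 * per (frag T b e) ≤ e - b ∧
  (b = 0 ∨ T[b - 1]? ≠ T[b - 1 + per (frag T b e)]?) ∧
  (e = T.length ∨ T[e]? ≠ T[e - per (frag T b e)]?)

/-- `T[b..e)` is a run of length at least `ℓ` and period at most `p`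
(i.e., an element of `RUNS_{ℓ,p}(T)`). -/
def IsRunLP {α : Type*} (T : List α) (ℓ p b e : ℕ) : Prop :=
  IsRun T b e ∧ ℓ ≤ e - b ∧ per (frag T b e) ≤ p

/-- `λ_k = (8/7)^⌊k/2⌋`. -/
noncomputable def lam (k : ℕ) : ℝ := (8 / 7 : ℝ) ^ (k / 2)

/-- `α_0 = 1`, `α_{k+1} = α_k + ⌊λ_k⌋`. -/
noncomputable def alph : ℕ → ℕ
  | 0 => 1
  | k + 1 => alph k + ⌊lam k⌋₊

/-- `m`-fold concatenation `R^m`. -/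
def listPow {α : Type*} (R : List α) : ℕ → List α
  | 0 => []
  | m + 1 => R ++ listPow R m

/-- The length of the primitive root of `S`
(the shortest prefix `R` of `S` with `S = R^m` for some `m ≥ 1`). -/
noncomputable def primRootLen {α : Type*} (S : List α) : ℕ :=
  sInf {r | 0 < r ∧ ∃ m : ℕ, 1 ≤ m ∧ S = listPow (S.take r) m}

/-- `i` and `j` are consecutive elements of the set `S`. -/
def Consecutive (S : Set ℕ) (i j : ℕ) : Prop :=
  i ∈ S ∧ j ∈ S ∧ i < j ∧ ∀ m ∈ S, m ≤ i ∨ j ≤ m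

/-- `(B k)_{k ∈ ℕ}` is a recompression chain for `T`. -/
def IsRecompressionChain {α : Type*} (T : List α) (B : ℕ → Set ℕ) : Prop :=
  B 0 = Set.Ico 1 T.length ∧
  (∀ k, B (k + 1) ⊆ B k) ∧
  (∀ k, B k ⊆ Set.Ico 1 T.length) ∧
  (∀ k, (B k).Finite ∧ ((B k).ncard : ℝ) * lam k ≤ 4 * T.length) ∧
  (∀ k i j : ℕ, alph k ≤ i → i + alph k ≤ T.length → alph k ≤ j → j + alph k ≤ T.length →
    i ∈ B k → frag T (i - alph k) (i + alph k) = frag T (j - alph k) (j + alph k) → j ∈ B k) ∧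
  (∀ k i j : ℕ, Consecutive (B k ∪ {0, T.length}) i j →
    (((j - i : ℕ) : ℝ) ≤ 7 / 4 * lam k ∨ (primRootLen (frag T i j) : ℝ) ≤ lam k))

/-- `k(τ) = max{ j : j = 0 ∨ 16·λ_{j-1} ≤ τ }`. -/
noncomputable def kOf (τ : ℕ) : ℕ :=
  sSup {j : ℕ | j = 0 ∨ 16 * lam (j - 1) ≤ (τ : ℝ)}

/-- The Elias-γ code of a positive integer `x`:
`⌊log₂ x⌋` zeros followed by the binary representation of `x` (MSB first). -/
def eliasGamma (x : ℕ) : List Bool :=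
  List.replicate (Nat.log 2 x) false ++ (Nat.bits x).reverse

/-- Sparse encoding, with `z` pending zeros in front of the remaining sequence. -/
def sparseEncAux : ℕ → List ℕ → List Bool
  | z, [] => if z = 0 then [] else false :: eliasGamma z
  | z, 0 :: rest => sparseEncAux (z + 1) rest
  | z, x :: rest =>
      (if z = 0 then [] else false :: eliasGamma z) ++ (true :: eliasGamma x)
        ++ sparseEncAux 0 rest

/-- The sparse encoding `⟨A⟩` of a sequence of non-negative integers. -/
def sparseEnc (A : List ℕ) : List Bool := sparseEncAux 0 A

/-- Number of bits contributed by the zero-run tokens of the sparse encoding,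
with `z` pending zeros. -/
def zeroRunBitsAux : ℕ → List ℕ → ℕ
  | z, [] => if z = 0 then 0 else 2 * Nat.log 2 z + 2
  | z, 0 :: rest => zeroRunBitsAux (z + 1) rest
  | z, _ :: rest => (if z = 0 then 0 else 2 * Nat.log 2 z + 2) + zeroRunBitsAux 0 rest

/-- Number of bits contributed by zero-run tokens to `⟨A⟩`. -/
def zeroRunBits (A : List ℕ) : ℕ := zeroRunBitsAux 0 A

/-- The natural number whose binary representation (MSB first) is `B`. -/
def bitsToNat (B : List Bool) : ℕ :=
  B.foldl (fun n b => 2 * n + cond b 1 0) 0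

/-- The symbol of the zipped string for a column of values. -/
def zipSym (col : List ℕ) : ℕ :=
  if col.all (· == 0) then 0 else bitsToNat (sparseEnc col)

/-- `zip(A_1, …, A_t)` for sequences of common length `n`. -/
def zipSeqs (A : List (List ℕ)) (n : ℕ) : List ℕ :=
  (List.range n).map fun i => zipSym (A.map fun S => S.getD i 0)

/-- Running a deterministic transducer with transition function `δ` from state `s`
on an input string: returns the state sequence `s_0, …, s_n` and the output string. -/
def runAux {Q Γ I : Type*} (δ : Q → I → Q × Γ) : Q → List I → List Q × List Γ
  | s, [] => ([s], [])
  | s, x :: xs =>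
      (s :: (runAux δ (δ s x).1 xs).1, (δ s x).2 :: (runAux δ (δ s x).1 xs).2)

/-- `R_{ℓ,p}(T) = { i : per(T[i..i+ℓ)) ≤ p }`. -/
def RSet {α : Type*} (T : List α) (ℓ p : ℕ) : Set ℕ :=
  {i | i + ℓ ≤ T.length ∧ per (frag T i (i + ℓ)) ≤ p}

/-!
Kempa–Kociumaka construction. Call the `τ`-window at `j` highly periodic if
`per(T[j..j+τ)) ≤ τ/3`. A position `s` with `per(T[s..s+2τ)) > τ/3` is synchronizing if either
none of the windows at `s, …, s+τ` is highly periodic and, for a fixed ranking `f` of fragments,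
the window of least rank among them starts at `s` or at `s+τ`; or `s` or `s+τ-1` is a border,
where highly periodic windows start or stop. Membership depends only on `T[s..s+2τ)`, which gives
consistency. Highly periodic windows less than `τ/3` apart overlap enough to share a period, so if
all windows starting in `[i, i+2τ)` are highly periodic then so is `T[i..i+3τ-1)`; otherwise a
border or a window minimum yields a synchronizing position in `[i, i+τ)`. For the size, borders of
the same kind are more than `τ/3` apart, and the windows at `s, …, s+τ` comprise at least
`(τ+1)/3` distinct fragments, so under a uniformly random ranking `s` is a window minimum with
probability at most `6/(τ+1)`; some ranking does no worse than the average.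
-/

open Finset

variable {α : Type*}

/-- A period of `T[a..b)` in the coordinates of `T`; unlike `IsPeriod`, no bounds on `p`. -/
def IsPeriodOn (T : List α) (a b p : ℕ) : Prop :=
  ∀ x, a ≤ x → x + p < b → T[x]? = T[x + p]?

theorem frag_length (T : List α) {a b : ℕ} (hab : a ≤ b) (hb : b ≤ T.length) :
    (frag T a b).length = b - a := by
  simp only [frag, List.length_take, List.length_drop]
  omega

theorem frag_getElem? (T : List α) (a b t : ℕ) :
    (frag T a b)[t]? = if t < b - a then T[a + t]? else none := by
  split_ifs with ht
  · simp [frag, ht, List.getElem?_drop]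
  · simp [frag, ht]

theorem frag_eq_frag_iff (T : List α) (a b L : ℕ) :
    frag T a (a + L) = frag T b (b + L) ↔ ∀ t < L, T[a + t]? = T[b + t]? := by
  rw [List.ext_getElem?_iff]
  refine forall_congr' fun t => ?_
  simp only [frag_getElem?, Nat.add_sub_cancel_left]
  split_ifs with ht <;> simp [ht]

theorem isPeriod_frag_iff (T : List α) {a b p : ℕ} (hab : a ≤ b) (hb : b ≤ T.length) :
    IsPeriod (frag T a b) p ↔ 1 ≤ p ∧ p ≤ b - a ∧ IsPeriodOn T a b p := by
  simp only [IsPeriod, IsPeriodOn, frag_length T hab hb, frag_getElem?]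
  refine and_congr_right fun _ => and_congr_right fun _ =>
    ⟨fun h x hx hxp => ?_, fun h i hi => ?_⟩
  · have := h (x - a) (by omega)
    rwa [if_pos (by omega), if_pos (by omega), Nat.add_sub_cancel' hx,
      show a + (x - a + p) = x + p by omega] at this
  · rw [if_pos (by omega), if_pos (by omega), ← add_assoc]
    exact h (a + i) (by omega) (by omega)

theorem per_frag_spec (T : List α) {a b : ℕ} (hab : a < b) (hb : b ≤ T.length) :
    1 ≤ per (frag T a b) ∧ per (frag T a b) ≤ b - a ∧
      IsPeriodOn T a b (per (frag T a b)) := by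
  refine (isPeriod_frag_iff T hab.le hb).1
    (Nat.sInf_mem (s := {p | IsPeriod (frag T a b) p}) ⟨b - a, ?_⟩)
  exact (isPeriod_frag_iff T hab.le hb).2 ⟨by omega, le_rfl, fun x _ _ => by omega⟩

theorem per_frag_le (T : List α) {a b p : ℕ} (hb : b ≤ T.length) (hp : 1 ≤ p)
    (hpb : p ≤ b - a) (h : IsPeriodOn T a b p) : per (frag T a b) ≤ p :=
  Nat.sInf_le ((isPeriod_frag_iff T (by omega) hb).2 ⟨hp, hpb, h⟩)

theorem IsPeriodOn.mono {T : List α} {a b a' b' p : ℕ} (h : IsPeriodOn T a b p)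
    (ha : a ≤ a') (hb : b' ≤ b) : IsPeriodOn T a' b' p :=
  fun x hx hxp => h x (by omega) (by omega)

theorem per_frag_le_per_frag (T : List α) {a b a' b' : ℕ} (ha : a ≤ a') (hb' : b' ≤ b)
    (hb : b ≤ T.length) (hab : a < b) (hle : per (frag T a b) ≤ b' - a') :
    per (frag T a' b') ≤ per (frag T a b) :=
  have ⟨h1, _, h3⟩ := per_frag_spec T hab hb
  per_frag_le T (by omega) h1 hle (h3.mono ha hb')

theorem IsPeriodOn.extend_left {T : List α} {a b c d p r : ℕ} (hl : IsPeriodOn T a b r)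
    (hr : IsPeriodOn T c d p) (hr0 : 0 < r) (hbd : b ≤ d) (hov : c + p + r ≤ b) :
    IsPeriodOn T a d p := by
  suffices ∀ k x, c ≤ x + k → a ≤ x → x + p < d → T[x]? = T[x + p]? from
    fun x hx hxp => this c x (by omega) hx hxp
  intro k
  induction k with
  | zero => exact fun x hcx _ hxp => hr x (by omega) hxp
  | succ k ih =>
    intro x hck hax hxp
    by_cases hcx : c ≤ x
    · exact hr x hcx hxp
    calc T[x]? = T[x + r]? := hl x hax (by omega)
      _ = T[x + r + p]? := ih (x + r) (by omega) (by omega) (by omega)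
      _ = T[x + p]? := by rw [add_right_comm]; exact (hl (x + p) (by omega) (by omega)).symm

def HighlyPeriodic (T : List α) (τ j : ℕ) : Prop :=
  j + τ ≤ T.length ∧ 3 * per (frag T j (j + τ)) ≤ τ

theorem HighlyPeriodic.between {T : List α} {τ q q' q'' : ℕ} (hτ : 0 < τ)
    (hq : HighlyPeriodic T τ q) (hq' : HighlyPeriodic T τ q') (h₁ : q ≤ q'')
    (h₂ : q'' ≤ q') (hgap : 3 * (q' - q) ≤ τ) :
    HighlyPeriodic T τ q'' := by
  obtain ⟨hqn, hqper⟩ := hq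
  obtain ⟨hqn', hqper'⟩ := hq'
  obtain ⟨hp1, -, hper1⟩ := per_frag_spec T (show q < q + τ by omega) hqn
  obtain ⟨hp2, -, hper2⟩ := per_frag_spec T (show q' < q' + τ by omega) hqn'
  have hunion := hper1.extend_left hper2 hp1 (by omega) (by omega)
  refine ⟨by omega, ?_⟩
  have := per_frag_le T (by omega) hp2 (by omega) (hunion.mono (b' := q'' + τ) h₁ (by omega))
  omega

theorem three_mul_per_le_of_forall_highlyPeriodic {T : List α} {τ a b : ℕ} (hτ : 0 < τ)
    (hab : a ≤ b) (H : ∀ j, a ≤ j → j ≤ b → HighlyPeriodic T τ j) :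
    3 * per (frag T a (b + τ)) ≤ τ := by
  induction b, hab using Nat.le_induction with
  | base => exact (H a le_rfl le_rfl).2
  | succ b hab ih =>
    have hprev := ih fun j hj hjb => H j hj (by omega)
    obtain ⟨hbn, -⟩ := H b (by omega) (by omega)
    obtain ⟨hn, hnext⟩ := H (b + 1) (by omega) le_rfl
    obtain ⟨hp, -, hpern⟩ := per_frag_spec T (show b + 1 < b + 1 + τ by omega) hn
    obtain ⟨hr, -, hperp⟩ := per_frag_spec T (show a < b + τ by omega) (by omega)
    have hunion := hperp.extend_left hpern hr (by omega) (by omega)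
    have := per_frag_le T hn hp (by omega) hunion
    omega

theorem lt_three_mul_per_of_not_highlyPeriodic {T : List α} {τ s j : ℕ} (hτ : 0 < τ)
    (hs : s + 2 * τ ≤ T.length) (hsj : s ≤ j) (hj : j + τ ≤ s + 2 * τ)
    (hj' : ¬HighlyPeriodic T τ j) : τ < 3 * per (frag T s (s + 2 * τ)) := by
  by_contra! hper
  refine hj' ⟨by omega, ?_⟩
  have := per_frag_le_per_frag T hsj hj hs (by omega) (by omega)
  omega

theorem card_le_of_forall_le_of_gap {S : Finset ℕ} {hi k g : ℕ} (hg : 0 < g)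
    (hS : ∀ x ∈ S, x ≤ hi) (hgap : ∀ x ∈ S, ∀ y ∈ S, x < y → g ≤ k * (y - x)) :
    #S ≤ k * hi / g + 1 := by
  have hmono : ∀ x ∈ S, ∀ y ∈ S, x < y → k * x / g < k * y / g := by
    intro x hx y hy hxy
    have : k * x + g ≤ k * y := by
      have := hgap x hx y hy hxy
      rw [Nat.mul_sub] at this
      have := Nat.mul_le_mul_left k hxy.le
      omega
    calc k * x / g < k * x / g + 1 := Nat.lt_succ_self _
      _ = (k * x + g) / g := (Nat.add_div_right _ hg).symm
      _ ≤ k * y / g := Nat.div_le_div_right this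
  simpa using card_le_card_of_injOn (t := range (k * hi / g + 1)) (fun x => k * x / g)
    (fun x hx => mem_range_succ_iff.2 (Nat.div_le_div_right (Nat.mul_le_mul_left k (hS x hx))))
    (fun x hx y hy hxy => by
      by_contra hne
      rcases Nat.lt_or_gt_of_ne hne with h | h
      · exact (hmono x hx y hy h).ne hxy
      · exact (hmono y hy x hx h).ne hxy.symm)

theorem exists_flip {Q : ℕ → Prop} {a b : ℕ} (hab : a ≤ b) (ha : Q a) (hb : ¬Q b) :
    ∃ j, a ≤ j ∧ j < b ∧ Q j ∧ ¬Q (j + 1) := by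
  by_contra! h
  exact hb (Nat.le_induction (P := fun m _ => m ≤ b → Q m) (fun _ => ha)
    (fun j hj ih hjb => h j hj (by omega) (ih (by omega))) b hab le_rfl)

/-- Under a uniformly random ranking `r ∘ π`, a fixed element of `D` is the minimum of `D`
with probability at most `1 / #D`. -/
theorem card_filter_perm_forall_le_mul_card_le {ι β : Type*} [Fintype ι] [DecidableEq ι]
    [LinearOrder β] {r : ι → β} (hr : Function.Injective r) {D : Finset ι} {x : ι}
    (hx : x ∈ D) :
    #{π : Equiv.Perm ι | ∀ y ∈ D, r (π x) ≤ r (π y)} * #D ≤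
      Fintype.card (Equiv.Perm ι) := by
  set E : ι → Finset (Equiv.Perm ι) := fun y => {π | ∀ z ∈ D, r (π y) ≤ r (π z)}
  have hswap : ∀ y ∈ D, #(E x) ≤ #(E y) := by
    intro y hy
    refine card_le_card_of_injOn (· * Equiv.swap x y) (fun π hπ => ?_)
      (mul_left_injective _).injOn
    simp only [E, coe_filter, mem_univ, true_and, Set.mem_ofPred_eq, Equiv.Perm.mul_apply,
      Equiv.swap_apply_right] at hπ ⊢
    intro z hz
    refine hπ _ ?_
    rcases eq_or_ne z x with rfl | hzx
    · simpa using hy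
    rcases eq_or_ne z y with rfl | hzy
    · simpa using hx
    · rwa [Equiv.swap_apply_of_ne_of_ne hzx hzy]
  have hdisj : (D : Set ι).PairwiseDisjoint E := by
    intro y hy z hz hyz
    refine disjoint_left.2 fun π hπy hπz => hyz (π.injective (hr ?_))
    simp only [E, mem_filter, mem_univ, true_and] at hπy hπz
    exact le_antisymm (hπy z hz) (hπz y hy)
  calc #(E x) * #D = ∑ _y ∈ D, #(E x) := by rw [sum_const, smul_eq_mul, mul_comm]
    _ ≤ ∑ y ∈ D, #(E y) := sum_le_sum hswap
    _ = #(D.biUnion E) := (card_biUnion hdisj).symm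
    _ ≤ Fintype.card (Equiv.Perm ι) := card_le_univ _

theorem exists_card_filter_mul_le {κ Ω : Type*} [Fintype Ω] [Nonempty Ω] (S : Finset κ)
    (P : κ → Ω → Prop) [∀ s ω, Decidable (P s ω)] {c K : ℕ}
    (h : ∀ s ∈ S, #{ω | P s ω} * c ≤ K * Fintype.card Ω) :
    ∃ ω, #{s ∈ S | P s ω} * c ≤ K * #S := by
  have hsum : ∑ ω, #{s ∈ S | P s ω} * c ≤ ∑ _ω : Ω, K * #S := by
    calc ∑ ω, #{s ∈ S | P s ω} * c = ∑ s ∈ S, #{ω | P s ω} * c := by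
          rw [← sum_mul, ← sum_mul]
          exact congrArg (· * c) (sum_card_bipartiteAbove_eq_sum_card_bipartiteBelow _).symm
      _ ≤ ∑ _s ∈ S, K * Fintype.card Ω := sum_le_sum h
      _ = ∑ _ω : Ω, K * #S := by simp only [sum_const, card_univ, smul_eq_mul]; ring
  obtain ⟨ω, -, hω⟩ := exists_le_of_sum_le univ_nonempty hsum
  exact ⟨ω, hω⟩

def IsBorder (T : List α) (τ j : ℕ) : Prop :=
  ¬(HighlyPeriodic T τ j ↔ HighlyPeriodic T τ (j + 1))

def WindowMinAt (T : List α) (τ : ℕ) (f : List α → ℕ) (s e : ℕ) : Prop :=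
  ∀ d ≤ τ, f (frag T (s + e) (s + e + τ)) ≤ f (frag T (s + d) (s + d + τ))

def IsMinPos (T : List α) (τ : ℕ) (f : List α → ℕ) (s : ℕ) : Prop :=
  (∀ d ≤ τ, ¬HighlyPeriodic T τ (s + d)) ∧
    (WindowMinAt T τ f s 0 ∨ WindowMinAt T τ f s τ)

def IsSyncPos (T : List α) (τ : ℕ) (f : List α → ℕ) (s : ℕ) : Prop :=
  (s + 2 * τ ≤ T.length ∧ τ < 3 * per (frag T s (s + 2 * τ))) ∧
  (IsMinPos T τ f s ∨ IsBorder T τ s ∨ IsBorder T τ (s + (τ - 1)))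

theorem frag_add_eq_frag_add {T : List α} {i j L d e : ℕ} (hde : d + e ≤ L)
    (heq : frag T i (i + L) = frag T j (j + L)) :
    frag T (i + d) (i + d + e) = frag T (j + d) (j + d + e) := by
  rw [frag_eq_frag_iff] at heq ⊢
  intro t ht
  simpa only [add_assoc] using heq (d + t) (by omega)

section Consistency

variable {T : List α} {τ i j : ℕ}

theorem highlyPeriodic_add_iff (hi : i + 2 * τ ≤ T.length) (hj : j + 2 * τ ≤ T.length)
    (heq : frag T i (i + 2 * τ) = frag T j (j + 2 * τ)) {d : ℕ} (hd : d ≤ τ) :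
    HighlyPeriodic T τ (i + d) ↔ HighlyPeriodic T τ (j + d) := by
  unfold HighlyPeriodic
  rw [frag_add_eq_frag_add (by omega) heq]
  exact and_congr_left fun _ => ⟨fun _ => by omega, fun _ => by omega⟩

theorem isBorder_add_iff (hi : i + 2 * τ ≤ T.length) (hj : j + 2 * τ ≤ T.length)
    (heq : frag T i (i + 2 * τ) = frag T j (j + 2 * τ)) {d : ℕ} (hd : d < τ) :
    IsBorder T τ (i + d) ↔ IsBorder T τ (j + d) := by
  unfold IsBorder
  rw [add_assoc, add_assoc, highlyPeriodic_add_iff hi hj heq hd.le,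
    highlyPeriodic_add_iff hi hj heq hd]

theorem isSyncPos_of_frag_eq (hτ : 0 < τ) (hi : i + 2 * τ ≤ T.length)
    (hj : j + 2 * τ ≤ T.length) (heq : frag T i (i + 2 * τ) = frag T j (j + 2 * τ))
    {f : List α → ℕ} (h : IsSyncPos T τ f i) : IsSyncPos T τ f j := by
  obtain ⟨⟨-, hper⟩, hrule⟩ := h
  refine ⟨⟨hj, heq ▸ hper⟩, ?_⟩
  have hmin : ∀ e ≤ τ, WindowMinAt T τ f i e → WindowMinAt T τ f j e :=
    fun e he hm d hd => by
      rw [← frag_add_eq_frag_add (by omega) heq, ← frag_add_eq_frag_add (by omega) heq]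
      exact hm d hd
  have hnp : ∀ d ≤ τ, ¬HighlyPeriodic T τ (i + d) → ¬HighlyPeriodic T τ (j + d) :=
    fun d hd => (highlyPeriodic_add_iff hi hj heq hd).not.1
  have hB0 := isBorder_add_iff hi hj heq hτ
  have hB1 := isBorder_add_iff hi hj heq (show τ - 1 < τ by omega)
  simp only [add_zero] at hB0
  rcases hrule with ⟨hnp', hm | hm⟩ | hb | hb
  · exact .inl ⟨fun d hd => hnp d hd (hnp' d hd), .inl (hmin 0 (Nat.zero_le _) hm)⟩
  · exact .inl ⟨fun d hd => hnp d hd (hnp' d hd), .inr (hmin τ le_rfl hm)⟩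
  · exact .inr (.inl (hB0.1 hb))
  · exact .inr (.inr (hB1.1 hb))

end Consistency

theorem not_isSyncPos_of_three_mul_per_le {T : List α} {τ i s : ℕ} (f : List α → ℕ)
    (hi : i + 3 * τ ≤ T.length + 1) (hper : 3 * per (frag T i (i + 3 * τ - 1)) ≤ τ)
    (his : i ≤ s) (hsi : s < i + τ) : ¬IsSyncPos T τ f s := by
  rintro ⟨⟨-, hs⟩, -⟩
  have := per_frag_le_per_frag T his (show s + 2 * τ ≤ i + 3 * τ - 1 by omega) (by omega)
    (by omega) (by omega)
  omega

theorem exists_isBorder_between {T : List α} {τ q m : ℕ} (hq : HighlyPeriodic T τ q)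
    (hm : ¬HighlyPeriodic T τ m) : ∃ j, min q m ≤ j ∧ j < max q m ∧ IsBorder T τ j := by
  rcases lt_or_gt_of_ne (show q ≠ m by rintro rfl; exact hm hq) with hlt | hlt
  · obtain ⟨j, h₁, h₂, hj, hj'⟩ := exists_flip hlt.le hq hm
    exact ⟨j, by omega, by omega, fun h => hj' (h.1 hj)⟩
  · obtain ⟨j, h₁, h₂, hj, hj'⟩ :=
      exists_flip (Q := (¬HighlyPeriodic T τ ·)) hlt.le hm (not_not.2 hq)
    exact ⟨j, by omega, by omega, fun h => hj (h.2 (not_not.1 hj'))⟩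

section Density

variable {T : List α} {τ i : ℕ} (f : List α → ℕ)

theorem exists_isSyncPos_of_isBorder (hτ : 0 < τ) (hi : i + 3 * τ ≤ T.length + 1) {j : ℕ}
    (hij : i ≤ j) (hj : j + 2 ≤ i + 2 * τ) (hb : IsBorder T τ j) :
    ∃ s, i ≤ s ∧ s < i + τ ∧ IsSyncPos T τ f s := by
  obtain ⟨m, hm, hjm, hmj⟩ : ∃ m, ¬HighlyPeriodic T τ m ∧ j ≤ m ∧ m ≤ j + 1 := by
    by_cases h : HighlyPeriodic T τ j
    · exact ⟨j + 1, fun h' => hb (iff_of_true h h'), by omega, le_rfl⟩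
    · exact ⟨j, h, le_rfl, by omega⟩
  by_cases hjτ : j < i + τ
  · exact ⟨j, hij, hjτ, ⟨by omega, lt_three_mul_per_of_not_highlyPeriodic hτ (by omega) hjm
      (by omega) hm⟩, .inr (.inl hb)⟩
  · refine ⟨j + 1 - τ, by omega, by omega, ⟨by omega,
      lt_three_mul_per_of_not_highlyPeriodic hτ (by omega) (by omega) (by omega) hm⟩,
      .inr (.inr ?_)⟩
    rwa [show j + 1 - τ + (τ - 1) = j by omega]

theorem exists_isSyncPos_of_forall_not_highlyPeriodic (hτ : 0 < τ)
    (hi : i + 3 * τ ≤ T.length + 1)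
    (hnp : ∀ q, i ≤ q → q < i + 2 * τ → ¬HighlyPeriodic T τ q) :
    ∃ s, i ≤ s ∧ s < i + τ ∧ IsSyncPos T τ f s := by
  obtain ⟨M, hM, hmin⟩ := exists_min_image (Ico i (i + 2 * τ)) (fun j => f (frag T j (j + τ)))
    ⟨i, mem_Ico.2 ⟨le_rfl, by omega⟩⟩
  rw [mem_Ico] at hM
  have hsync : ∀ s e, s + e = M → (e = 0 ∨ e = τ) → i ≤ s → s < i + τ →
      IsSyncPos T τ f s := by
    intro s e hse he his hsi
    have hmin' : WindowMinAt T τ f s e := fun d hd => by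
      rw [hse]
      exact hmin (s + d) (mem_Ico.2 ⟨by omega, by omega⟩)
    refine ⟨⟨by omega, lt_three_mul_per_of_not_highlyPeriodic hτ (by omega) (by omega)
      (by omega) (hnp M hM.1 hM.2)⟩, .inl ⟨fun d hd => hnp _ (by omega) (by omega), ?_⟩⟩
    rcases he with rfl | rfl
    exacts [.inl hmin', .inr hmin']
  by_cases hMτ : M < i + τ
  · exact ⟨M, hM.1, hMτ, hsync M 0 rfl (.inl rfl) hM.1 hMτ⟩
  · exact ⟨M - τ, by omega, by omega,
      hsync (M - τ) τ (by omega) (.inr rfl) (by omega) (by omega)⟩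

theorem exists_isSyncPos_of_lt_three_mul_per (hτ : 0 < τ) (hi : i + 3 * τ ≤ T.length + 1)
    (hper : τ < 3 * per (frag T i (i + 3 * τ - 1))) :
    ∃ s, i ≤ s ∧ s < i + τ ∧ IsSyncPos T τ f s := by
  obtain ⟨m, him, hmi, hm⟩ : ∃ m, i ≤ m ∧ m < i + 2 * τ ∧ ¬HighlyPeriodic T τ m := by
    by_contra! h
    have := three_mul_per_le_of_forall_highlyPeriodic hτ (show i ≤ i + 2 * τ - 1 by omega)
      fun j hj hj' => h j hj (by omega)
    rw [show i + 2 * τ - 1 + τ = i + 3 * τ - 1 by omega] at this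
    omega
  by_cases hq : ∃ q, i ≤ q ∧ q < i + 2 * τ ∧ HighlyPeriodic T τ q
  · obtain ⟨q, hiq, hqi, hq⟩ := hq
    obtain ⟨j, hj, hj', hb⟩ := exists_isBorder_between hq hm
    exact exists_isSyncPos_of_isBorder f hτ hi (by omega) (by omega) hb
  · simp only [not_exists, not_and] at hq
    exact exists_isSyncPos_of_forall_not_highlyPeriodic f hτ hi hq

theorem isSyncSet_setOf_isSyncPos (hτ : 0 < τ) : IsSyncSet T τ {s | IsSyncPos T τ f s} := by
  refine ⟨fun s hs => hs.1.1, fun i j hi hj hs heq => isSyncPos_of_frag_eq hτ hi hj heq hs,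
    fun i hi => ⟨fun hemp => ?_, fun hper => ?_⟩⟩
  · by_contra! hper
    obtain ⟨s, his, hsi, hs⟩ := exists_isSyncPos_of_lt_three_mul_per f hτ hi hper
    exact hemp.subset ⟨⟨his, hsi⟩, hs⟩
  · exact Set.eq_empty_of_forall_notMem fun s ⟨⟨his, hsi⟩, hs⟩ =>
      not_isSyncPos_of_three_mul_per_le f hi hper his hsi hs

end Density

theorem card_le_of_forall_isBorder_add {T : List α} {τ : ℕ} (hτ : 0 < τ) (c : ℕ)
    (S : Finset ℕ) (hS : ∀ s ∈ S, IsBorder T τ (s + c)) :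
    #S ≤ 2 * (3 * T.length / (τ + 1) + 1) := by
  classical
  have hdrop : ∀ s ∈ S, HighlyPeriodic T τ (s + c) → ¬HighlyPeriodic T τ (s + c + 1) :=
    fun s hs h h' => hS s hs (iff_of_true h h')
  have hrise : ∀ s ∈ S, ¬HighlyPeriodic T τ (s + c) → HighlyPeriodic T τ (s + c + 1) :=
    fun s hs h => by_contra fun h' => hS s hs (iff_of_false h h')
  rw [← card_filter_add_card_filter_not (HighlyPeriodic T τ <| · + c)]
  have hdrops := card_le_of_forall_le_of_gap (hi := T.length) (k := 3) (g := τ + 1) (by omega)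
    (S := {s ∈ S | HighlyPeriodic T τ (s + c)})
    (fun s hs => by have := (mem_filter.1 hs).2.1; omega)
    (fun x hx y hy hxy => by
      rw [mem_filter] at hx hy
      by_contra! hclose
      exact hdrop x hx.1 hx.2 (hx.2.between hτ hy.2 (by omega) (by omega) (by omega)))
  have hrises := card_le_of_forall_le_of_gap (hi := T.length) (k := 3) (g := τ + 1) (by omega)
    (S := {s ∈ S | ¬HighlyPeriodic T τ (s + c)})
    (fun s hs => by have := (hrise s (mem_filter.1 hs).1 (mem_filter.1 hs).2).1; omega)
    (fun x hx y hy hxy => by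
      rw [mem_filter] at hx hy
      by_contra! hclose
      exact hy.2 ((hrise x hx.1 hx.2).between hτ (hrise y hy.1 hy.2) (by omega) (by omega)
        (by omega)))
  omega

theorem le_three_mul_card_image_frag [DecidableEq α] {T : List α} {τ s : ℕ}
    (hs : s + 2 * τ ≤ T.length) (hnp : ∀ d ≤ τ, ¬HighlyPeriodic T τ (s + d)) :
    τ + 1 ≤ 3 * #((range (τ + 1)).image fun d => frag T (s + d) (s + d + τ)) := by
  have hfiber : ∀ w ∈ (range (τ + 1)).image fun d => frag T (s + d) (s + d + τ),
      #{d ∈ range (τ + 1) | frag T (s + d) (s + d + τ) = w} ≤ 3 := by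
    intro w _
    have := card_le_of_forall_le_of_gap (hi := τ) (k := 3) (g := τ + 1) (by omega)
      (S := {d ∈ range (τ + 1) | frag T (s + d) (s + d + τ) = w})
      (fun d hd => by rw [mem_filter, mem_range] at hd; omega) (fun x hx y hy hxy => by
        rw [mem_filter, mem_range] at hx hy
        have heq := (frag_eq_frag_iff T (s + x) (s + y) τ).1 (hx.2.trans hy.2.symm)
        have hper : IsPeriodOn T (s + x) (s + x + τ) (y - x) := fun z hz hzτ => by
          simpa [show s + x + (z - (s + x)) = z by omega,
            show s + y + (z - (s + x)) = z + (y - x) by omega] using heq (z - (s + x)) (by omega)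
        by_contra! hclose
        exact hnp x (by omega) ⟨by omega, by
          have := per_frag_le T (by omega) (by omega) (by omega) hper
          omega⟩)
    have : 3 * τ / (τ + 1) < 3 := Nat.div_lt_of_lt_mul (by omega)
    omega
  have := card_le_mul_card_image _ 3 hfiber
  rw [card_range] at this
  omega

noncomputable def rankOf {γ : Type*} [DecidableEq γ] (F : Finset γ) (π : Equiv.Perm F)
    (y : γ) : ℕ :=
  if h : y ∈ F then F.equivFin (π ⟨y, h⟩) else 0

theorem card_filter_perm_rankOf_le_mul_card_le {γ : Type*} [DecidableEq γ] {F D : Finset γ}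
    (hDF : D ⊆ F) {x : γ} (hx : x ∈ D) :
    #{π : Equiv.Perm F | ∀ y ∈ D, rankOf F π x ≤ rankOf F π y} * #D ≤
      Fintype.card (Equiv.Perm F) := by
  have hr : Function.Injective fun z : F => (F.equivFin z : ℕ) :=
    fun a b h => F.equivFin.injective (Fin.ext h)
  have hrank : ∀ π (z : F), rankOf F π z = F.equivFin (π z) := fun π z => by simp [rankOf]
  have hD : #(D.subtype (· ∈ F)) = #D := by
    rw [card_subtype, filter_true_of_mem fun y hy => hDF hy]
  have := card_filter_perm_forall_le_mul_card_le hr (D := D.subtype (· ∈ F))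
    (x := ⟨x, hDF hx⟩) (mem_subtype.2 hx)
  rw [hD] at this
  convert this using 4 with π
  simp only [← hrank, Subtype.forall, mem_subtype]
  exact ⟨fun h y _ hy => h y hy, fun h y hy => h y (hDF hy) hy⟩

open Classical in
theorem card_filter_perm_isMinPos_mul_le [DecidableEq α] {T : List α} {τ s : ℕ}
    {F : Finset (List α)} (hF : ∀ d ≤ τ, frag T (s + d) (s + d + τ) ∈ F)
    (hs : s + 2 * τ ≤ T.length) (hnp : ∀ d ≤ τ, ¬HighlyPeriodic T τ (s + d)) :
    #{π : Equiv.Perm F | IsMinPos T τ (rankOf F π) s} * (τ + 1) ≤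
      6 * Fintype.card (Equiv.Perm F) := by
  set D := (range (τ + 1)).image fun d => frag T (s + d) (s + d + τ)
  have hDF : D ⊆ F := fun y hy => by
    obtain ⟨d, hd, rfl⟩ := mem_image.1 hy
    exact hF d (by rw [mem_range] at hd; omega)
  have hmem : ∀ e ≤ τ, frag T (s + e) (s + e + τ) ∈ D :=
    fun e he => mem_image.2 ⟨e, mem_range.2 (by omega), rfl⟩
  set E : ℕ → Finset (Equiv.Perm F) :=
    fun e => {π | ∀ y ∈ D, rankOf F π (frag T (s + e) (s + e + τ)) ≤ rankOf F π y}
  have hE : ∀ e ≤ τ, #(E e) * #D ≤ Fintype.card (Equiv.Perm F) :=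
    fun e he => card_filter_perm_rankOf_le_mul_card_le hDF (hmem e he)
  have hsub : ({π | IsMinPos T τ (rankOf F π) s} : Finset (Equiv.Perm F)) ⊆ E 0 ∪ E τ := by
    intro π hπ
    have hwin : ∀ e, WindowMinAt T τ (rankOf F π) s e → π ∈ E e := fun e h => by
      simp only [E, mem_filter, mem_univ, true_and, D, forall_mem_image, mem_range]
      exact fun d hd => h d (by omega)
    rcases (mem_filter.1 hπ).2.2 with h | h
    exacts [mem_union_left _ (hwin 0 h), mem_union_right _ (hwin τ h)]
  have hE₀ := hE 0 (Nat.zero_le τ)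
  have hEτ := hE τ le_rfl
  calc #{π : Equiv.Perm F | IsMinPos T τ (rankOf F π) s} * (τ + 1)
      ≤ (#(E 0) + #(E τ)) * (3 * #D) :=
        Nat.mul_le_mul ((card_le_card hsub).trans (card_union_le _ _))
          (le_three_mul_card_image_frag hs hnp)
    _ = 3 * (#(E 0) * #D) + 3 * (#(E τ) * #D) := by ring
    _ ≤ 6 * Fintype.card (Equiv.Perm F) := by omega

theorem exists_rank_card_isMinPos_le (T : List α) (τ : ℕ) :
    ∃ f : List α → ℕ, ∀ S : Finset ℕ,
      (∀ s ∈ S, s + 2 * τ ≤ T.length ∧ IsMinPos T τ f s) →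
      #S * (τ + 1) ≤ 6 * (T.length + 1) := by
  classical
  set F := (range (T.length + 1)).image fun j => frag T j (j + τ)
  have hbound : ∀ s ∈ range (T.length + 1), #{π : Equiv.Perm F |
      s + 2 * τ ≤ T.length ∧ IsMinPos T τ (rankOf F π) s} * (τ + 1) ≤
        6 * Fintype.card (Equiv.Perm F) := by
    intro s _
    by_cases hs : s + 2 * τ ≤ T.length ∧ ∀ d ≤ τ, ¬HighlyPeriodic T τ (s + d)
    · refine le_trans (Nat.mul_le_mul_right _ (card_le_card fun π hπ => ?_))
        (card_filter_perm_isMinPos_mul_le (fun d hd => ?_) hs.1 hs.2)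
      · simp only [mem_filter, mem_univ, true_and] at hπ ⊢
        exact hπ.2
      · exact mem_image.2 ⟨s + d, mem_range.2 (by omega), rfl⟩
    · rw [filter_false_of_mem fun π _ hπ => hs ⟨hπ.1, hπ.2.1⟩, card_empty, zero_mul]
      exact Nat.zero_le _
  obtain ⟨π, hπ⟩ := exists_card_filter_mul_le _ _ hbound
  refine ⟨rankOf F π, fun S hS => le_trans (Nat.mul_le_mul_right _ (card_le_card ?_))
    (hπ.trans_eq (by rw [card_range]))⟩
  exact fun s hs => mem_filter.2 ⟨mem_range.2 (by have := (hS s hs).1; omega), hS s hs⟩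

theorem mul_card_lt_of_forall_isSyncPos {T : List α} {τ : ℕ} {f : List α → ℕ}
    (hτ : 0 < τ) (hτn : 2 * τ ≤ T.length)
    (hf : ∀ S : Finset ℕ, (∀ s ∈ S, s + 2 * τ ≤ T.length ∧ IsMinPos T τ f s) →
      #S * (τ + 1) ≤ 6 * (T.length + 1))
    (S : Finset ℕ) (hS : ∀ s ∈ S, IsSyncPos T τ f s) : τ * #S < 70 * T.length := by
  classical
  set A := {s ∈ S | IsMinPos T τ f s}
  set B₀ := {s ∈ S | IsBorder T τ (s + 0)}
  set B₁ := {s ∈ S | IsBorder T τ (s + (τ - 1))}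
  have hsub : S ⊆ A ∪ (B₀ ∪ B₁) := fun s hs => by
    simp only [A, B₀, B₁, mem_union, mem_filter, add_zero, hs, true_and]
    exact (hS s hs).2
  have hcard : #S ≤ #A + (#B₀ + #B₁) :=
    (card_le_card hsub).trans <|
      (card_union_le _ _).trans (Nat.add_le_add_left (card_union_le _ _) _)
  have hA := hf A fun s hs => ⟨(hS s (mem_filter.1 hs).1).1.1, (mem_filter.1 hs).2⟩
  have hB₀ := card_le_of_forall_isBorder_add hτ 0 B₀ fun s hs => (mem_filter.1 hs).2
  have hB₁ := card_le_of_forall_isBorder_add hτ (τ - 1) B₁ fun s hs => (mem_filter.1 hs).2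
  have hdiv : τ * (3 * T.length / (τ + 1)) ≤ 3 * T.length :=
    (Nat.mul_le_mul_right _ τ.le_succ).trans (Nat.mul_div_le _ _)
  nlinarith [Nat.mul_le_mul_left τ hcard, Nat.mul_le_mul_left τ hB₀,
    Nat.mul_le_mul_left τ hB₁]

/-- For every string `T ∈ [0..σ)^n` and every `τ ∈ [1..⌊n/2⌋]` there exists a
`τ`-synchronizing set `Sync` of `T` with `|Sync| < 70n/τ` such that `per(T[i..i+2τ)) > τ/3`
holds for every `i ∈ Sync`. -/
theorem statement0 (σ n τ : ℕ) (T : List (Fin σ)) (hT : T.length = n)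
    (hτ1 : 1 ≤ τ) (hτ2 : 2 * τ ≤ n) :
    ∃ Sync : Finset ℕ,
      IsSyncSet T τ (↑Sync : Set ℕ) ∧
      τ * Sync.card < 70 * n ∧
      ∀ i ∈ Sync, τ < 3 * per (frag T i (i + 2 * τ)) := by
  classical
  subst hT
  obtain ⟨f, hf⟩ := exists_rank_card_isMinPos_le T τ
  set Sync := {s ∈ range (T.length + 1) | IsSyncPos T τ f s}
  have hmem : ∀ s, s ∈ Sync ↔ IsSyncPos T τ f s := fun s => by
    simp only [Sync, mem_filter, mem_range, and_iff_right_iff_imp]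
    exact fun h => by have := h.1.1; omega
  refine ⟨Sync, ?_, mul_card_lt_of_forall_isSyncPos hτ1 hτ2 hf Sync fun s => (hmem s).1,
    fun s hs => ((hmem s).1 hs).1.2⟩
  rw [show (Sync : Set ℕ) = {s | IsSyncPos T τ f s} from Set.ext hmem]
  exact isSyncSet_setOf_isSyncPos f hτ1

end SyncFormal
end

section
/- Let λ_k = (8/7)^{⌊k/2⌋} for k ∈ ℤ≥0, and define α_0 = 1 and α_k = α_{k−1} + ⌊λ_{k−1}⌋ for k ≥ 1. Then α_{k+1} ≤ 16·λ_k holds for every k ∈ ℤ≥0. -/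
namespace SyncFormal

lemma lam_pos (k : ℕ) : 0 < lam k := pow_pos (by norm_num) _

lemma lam_succ_le (n : ℕ) : lam (n + 1) ≤ lam (n + 2) :=
  pow_le_pow_right₀ (by norm_num) (Nat.div_le_div_right (by omega))

lemma lam_add_two (n : ℕ) : lam (n + 2) = (8 / 7) * lam n := by
  have h : (n + 2) / 2 = n / 2 + 1 := by omega
  rw [lam, lam, h, pow_succ]
  ring

lemma floor_lam_le (k : ℕ) : (⌊lam k⌋₊ : ℝ) ≤ lam k :=
  Nat.floor_le (lam_pos k).le

/-- `α_{k+1} ≤ 16·λ_k` for every `k ∈ ℤ≥0`. -/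
theorem statement3 (k : ℕ) : (alph (k + 1) : ℝ) ≤ 16 * lam k := by
  induction k using Nat.twoStepInduction with
  | zero => simp [alph, lam]; norm_num
  | one => simp [alph, lam]; norm_num
  | more n ih _ =>
    have h1 : (alph (n + 3) : ℝ) = alph (n + 1) + ⌊lam (n + 1)⌋₊ + ⌊lam (n + 2)⌋₊ := by
      show ((alph (n + 2) + ⌊lam (n + 2)⌋₊ : ℕ) : ℝ) = _
      push_cast [alph]
      ring
    have h2 := floor_lam_le (n + 1)
    have h3 := floor_lam_le (n + 2)
    have h4 := lam_succ_le n
    have h5 := lam_add_two n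
    calc (alph (n + 3) : ℝ) = alph (n + 1) + ⌊lam (n + 1)⌋₊ + ⌊lam (n + 2)⌋₊ := h1
      _ ≤ 16 * lam n + lam (n + 2) + lam (n + 2) := by
          have := h2.trans h4; linarith
      _ = 16 * lam (n + 2) := by rw [h5]; ring

end SyncFormal
end

section
/- For every two distinct non-empty sequences A and A' of non-negative integers, the sparse encoding ⟨A⟩ is a prefix of the sparse encoding ⟨A'⟩ if and only if A is a (proper) prefix of A' and it is not the case that both A'[|A|−1] = 0 and A'[|A|] = 0. -/
/-!
The Elias-γ code is prefix-free: the number `ℓ` of leading zeros of `γ(x)` fixes its length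
`2ℓ + 1`, and the remaining bits are those of `x`. Hence a prefix relation between sparse encodings
can only hold token by token, which forces `A` to be a prefix of `A'`. For `A' = A ++ B` the tokens
of `⟨A⟩` are exactly the leading tokens of `⟨A'⟩`, except when `A` ends in a block of zeros that
`B` continues: then the last token of `⟨A⟩` encodes a shorter zero run than the corresponding
token of `⟨A'⟩`.
-/

namespace SyncFormal

theorem _root_.List.eq_of_replicate_append_cons_prefix {α : Type*} {a b : α} (hab : a ≠ b) :
    ∀ {m n : ℕ} {u v : List α},
      List.replicate m a ++ b :: u <+: List.replicate n a ++ b :: v → m = n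
  | 0, 0, _, _, _ => rfl
  | 0, _ + 1, _, _, h => absurd (List.cons_prefix_cons.mp h).1 hab.symm
  | _ + 1, 0, _, _, h => absurd (List.cons_prefix_cons.mp h).1 hab
  | _ + 1, _ + 1, _, _, h =>
    congrArg (· + 1) (List.eq_of_replicate_append_cons_prefix hab (List.cons_prefix_cons.mp h).2)

theorem _root_.Nat.bits_injective : Function.Injective Nat.bits := fun x y h =>
  Nat.digits.injective 2 (by rw [Nat.digits_two_eq_bits, Nat.digits_two_eq_bits, h])

theorem _root_.Nat.length_bits {x : ℕ} (hx : x ≠ 0) : x.bits.length = Nat.log 2 x + 1 := by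
  rw [← Nat.length_digits 2 x (by norm_num) hx, Nat.digits_two_eq_bits, List.length_map]

theorem _root_.Nat.getLast_bits {x : ℕ} (hx : x ≠ 0) (h : x.bits ≠ []) :
    x.bits.getLast h = true := by
  have := Nat.getLast_digit_ne_zero 2 hx
  simp only [Nat.digits_two_eq_bits, List.getLast_map] at this
  revert this
  cases x.bits.getLast h <;> simp

theorem eliasGamma_eq_replicate_append_cons {x : ℕ} (hx : x ≠ 0) :
    ∃ r, eliasGamma x = List.replicate (Nat.log 2 x) false ++ true :: r := by
  have hne : x.bits ≠ [] := by simp [← List.length_pos_iff, Nat.length_bits hx]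
  refine ⟨(x.bits.dropLast).reverse, ?_⟩
  conv_lhs => rw [eliasGamma, ← List.dropLast_append_getLast hne, Nat.getLast_bits hx]
  simp

theorem length_eliasGamma {x : ℕ} (hx : x ≠ 0) :
    (eliasGamma x).length = 2 * Nat.log 2 x + 1 := by
  rw [eliasGamma, List.length_append, List.length_replicate, List.length_reverse,
    Nat.length_bits hx]
  omega

theorem eq_of_eliasGamma_append_prefix {x y : ℕ} (hx : x ≠ 0) (hy : y ≠ 0) {u w : List Bool}
    (h : eliasGamma x ++ u <+: eliasGamma y ++ w) : x = y := by
  have hlog : Nat.log 2 x = Nat.log 2 y := by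
    obtain ⟨r, hr⟩ := eliasGamma_eq_replicate_append_cons hx
    obtain ⟨r', hr'⟩ := eliasGamma_eq_replicate_append_cons hy
    rw [hr, hr'] at h
    simp only [List.append_assoc, List.cons_append] at h
    exact List.eq_of_replicate_append_cons_prefix Bool.false_ne_true h
  have hlen : (eliasGamma x).length = (eliasGamma y).length := by
    rw [length_eliasGamma hx, length_eliasGamma hy, hlog]
  have hγ : eliasGamma x = eliasGamma y :=
    (List.prefix_of_prefix_length_le ((List.prefix_append _ u).trans h) (List.prefix_append _ w)
      hlen.le).eq_of_length hlen
  rw [eliasGamma, eliasGamma, hlog] at hγ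
  exact Nat.bits_injective (List.reverse_injective (List.append_cancel_left hγ))

theorem cons_eliasGamma_append_prefix_iff {x y : ℕ} (hx : x ≠ 0) (hy : y ≠ 0) {b c : Bool}
    {u w : List Bool} :
    b :: (eliasGamma x ++ u) <+: c :: (eliasGamma y ++ w) ↔ b = c ∧ x = y ∧ u <+: w := by
  rw [List.cons_prefix_cons]
  constructor
  · rintro ⟨rfl, h⟩
    obtain rfl := eq_of_eliasGamma_append_prefix hx hy h
    exact ⟨rfl, rfl, List.prefix_append_right_inj _ |>.mp h⟩
  · rintro ⟨rfl, rfl, h⟩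
    exact ⟨rfl, (List.prefix_append_right_inj _).mpr h⟩

def zeroRunToken (z : ℕ) : List Bool := if z = 0 then [] else false :: eliasGamma z

theorem zeroRunToken_of_ne_zero {z : ℕ} (hz : z ≠ 0) : zeroRunToken z = false :: eliasGamma z :=
  if_neg hz

theorem sparseEncAux_nil (z : ℕ) : sparseEncAux z [] = zeroRunToken z := rfl

theorem sparseEncAux_cons_zero (z : ℕ) (A : List ℕ) :
    sparseEncAux z (0 :: A) = sparseEncAux (z + 1) A := rfl

theorem sparseEncAux_cons_succ (z a : ℕ) (A : List ℕ) :
    sparseEncAux z ((a + 1) :: A) =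
      zeroRunToken z ++ true :: (eliasGamma (a + 1) ++ sparseEncAux 0 A) := by
  simp only [sparseEncAux, zeroRunToken, List.append_assoc, List.cons_append]

theorem sparseEncAux_cons_zero_eq (z : ℕ) (A : List ℕ) :
    ∃ z' w, z < z' ∧ sparseEncAux z (0 :: A) = false :: (eliasGamma z' ++ w) := by
  induction A generalizing z with
  | nil => exact ⟨z + 1, [], by omega, by simp [sparseEncAux_cons_zero, sparseEncAux_nil,
      zeroRunToken_of_ne_zero]⟩
  | cons a A ih =>
    rcases a with _ | a
    · obtain ⟨z', w, hz', h⟩ := ih (z + 1)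
      exact ⟨z', w, by omega, h⟩
    · exact ⟨z + 1, _, by omega, by rw [sparseEncAux_cons_zero, sparseEncAux_cons_succ,
        zeroRunToken_of_ne_zero z.succ_ne_zero, List.cons_append]⟩

theorem sparseEncAux_cons_zero_not_prefix {z : ℕ} {A A' : List ℕ} (hA' : A'.head? ≠ some 0) :
    ¬sparseEncAux z (0 :: A) <+: sparseEncAux z A' := by
  obtain ⟨z', w, hzz', he⟩ := sparseEncAux_cons_zero_eq z A
  have key : ∀ v, ¬false :: (eliasGamma z' ++ w) <+: zeroRunToken z ++ true :: v := by
    intro v h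
    rcases eq_or_ne z 0 with rfl | hz
    · simp [zeroRunToken] at h
    · rw [zeroRunToken_of_ne_zero hz, List.cons_append,
        cons_eliasGamma_append_prefix_iff (by omega) hz] at h
      omega
  rw [he]
  intro h
  rcases A' with _ | ⟨_ | a, A'⟩
  · exact key [] (h.trans (List.prefix_append _ _))
  · simp at hA'
  · rw [sparseEncAux_cons_succ] at h
    exact key _ h

theorem sparseEncAux_not_prefix_cons_zero {z : ℕ} {A A' : List ℕ} (hzA : z ≠ 0 ∨ A ≠ [])
    (hA : A.head? ≠ some 0) : ¬sparseEncAux z A <+: sparseEncAux z (0 :: A') := by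
  obtain ⟨z', w, hzz', he⟩ := sparseEncAux_cons_zero_eq z A'
  have key : z ≠ 0 → ¬zeroRunToken z <+: false :: (eliasGamma z' ++ w) := by
    intro hz h
    rw [zeroRunToken_of_ne_zero hz, ← List.append_nil (eliasGamma z),
      cons_eliasGamma_append_prefix_iff hz (by omega)] at h
    omega
  rw [he]
  intro h
  rcases A with _ | ⟨_ | a, A⟩
  · exact key (hzA.resolve_right (by simp)) h
  · simp at hA
  · rw [sparseEncAux_cons_succ] at h
    rcases eq_or_ne z 0 with rfl | hz
    · simp [zeroRunToken] at h
    · exact key hz ((List.prefix_append _ _).trans h)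

theorem prefix_of_sparseEncAux_prefix {z : ℕ} {A A' : List ℕ}
    (h : sparseEncAux z A <+: sparseEncAux z A') : A <+: A' := by
  induction A generalizing z A' with
  | nil => exact List.nil_prefix
  | cons a A ih =>
    by_cases hA' : A'.head? = some 0
    · obtain ⟨A', rfl⟩ := List.head?_eq_some_iff.mp hA'
      rcases a with _ | a
      · exact List.cons_prefix_cons.mpr ⟨rfl, ih h⟩
      · exact absurd h (sparseEncAux_not_prefix_cons_zero (Or.inr (by simp)) (by simp))
    · rcases a with _ | a
      · exact absurd h (sparseEncAux_cons_zero_not_prefix hA')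
      rcases A' with _ | ⟨_ | a', A'⟩
      · rw [sparseEncAux_cons_succ, sparseEncAux_nil] at h
        exact absurd h.length_le (by simp)
      · simp at hA'
      · rw [sparseEncAux_cons_succ, sparseEncAux_cons_succ, List.prefix_append_right_inj,
          cons_eliasGamma_append_prefix_iff a.succ_ne_zero a'.succ_ne_zero] at h
        obtain ⟨-, ha, h⟩ := h
        obtain rfl : a = a' := by omega
        exact List.cons_prefix_cons.mpr ⟨rfl, ih h⟩

theorem sparseEncAux_prefix_append_iff {z : ℕ} {A B : List ℕ} :
    sparseEncAux z A <+: sparseEncAux z (A ++ B) ↔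
      ¬((List.replicate z 0 ++ A).getLast? = some 0 ∧ B.head? = some 0) := by
  induction A generalizing z with
  | nil =>
    rcases B with _ | ⟨_ | b, B⟩
    · simp
    · rcases eq_or_ne z 0 with rfl | hz
      · simp [sparseEncAux_nil, zeroRunToken]
      · simpa [hz, List.getLast?_replicate] using
          sparseEncAux_not_prefix_cons_zero (A := []) (A' := B) (Or.inl hz) (by simp)
    · simp [sparseEncAux_cons_succ, sparseEncAux_nil]
  | cons a A ih =>
    rcases a with _ | a
    · rw [List.cons_append, sparseEncAux_cons_zero, sparseEncAux_cons_zero, ih,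
        List.replicate_succ', List.append_assoc, List.singleton_append]
    · rw [List.cons_append, sparseEncAux_cons_succ, sparseEncAux_cons_succ,
        List.prefix_append_right_inj, List.cons_prefix_cons, List.prefix_append_right_inj, ih]
      cases A <;> simp [List.getLast?_cons]

theorem statement6_general (A A' : List ℕ) (hA : A ≠ []) (hne : A ≠ A') :
    sparseEnc A <+: sparseEnc A' ↔
      (A <+: A' ∧ ¬(A'.getD (A.length - 1) 0 = 0 ∧ A'.getD A.length 0 = 0)) := by
  suffices key : ∀ B ≠ [], sparseEnc A <+: sparseEnc (A ++ B) ↔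
      ¬((A ++ B).getD (A.length - 1) 0 = 0 ∧ (A ++ B).getD A.length 0 = 0) by
    constructor
    · intro h
      obtain ⟨B, rfl⟩ := prefix_of_sparseEncAux_prefix h
      exact ⟨List.prefix_append A B, (key B (by rintro rfl; simp at hne)).mp h⟩
    · rintro ⟨⟨B, rfl⟩, hc⟩
      exact (key B (by rintro rfl; simp at hne)).mpr hc
  intro B hB
  obtain ⟨b, B, rfl⟩ := List.exists_cons_of_ne_nil hB
  have hlast : A.length - 1 < A.length := by
    have := List.length_pos_iff.mpr hA
    omega
  rw [sparseEnc, sparseEnc, sparseEncAux_prefix_append_iff, List.replicate_zero, List.nil_append,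
    List.getD_append _ _ _ _ hlast, List.getD_append_right _ _ _ _ le_rfl, Nat.sub_self,
    List.getLast?_eq_getElem?, List.getD_eq_getElem?_getD, List.getElem?_eq_getElem hlast]
  simp

/-- For distinct non-empty `A, A'`, `⟨A⟩` is a prefix of `⟨A'⟩` iff
`A` is a (proper) prefix of `A'` and not both `A'[|A|−1] = 0` and `A'[|A|] = 0`. -/
theorem statement6 (A A' : List ℕ) (hA : A ≠ []) (hA' : A' ≠ []) (hne : A ≠ A') :
    sparseEnc A <+: sparseEnc A' ↔
      (A <+: A' ∧ ¬(A'.getD (A.length - 1) 0 = 0 ∧ A'.getD A.length 0 = 0)) :=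
  statement6_general A A' hA hne

end SyncFormal
end

section
/- Let A be a sequence of n non-negative integers, let i_1 < i_2 < ⋯ < i_a be the positions i ∈ [0..n) with A[i] ≠ 0, and set i_0 = −1 and i_{a+1} = n. Then the total number of bits contributed by zero-run tokens to the sparse encoding ⟨A⟩ is at most 2a + 2 + Σ_{j=0}^{a} 2⌊log₂(i_{j+1} − i_j)⌋, and there is a universal constant C such that this quantity is at most C·(a+1)·(1 + log₂((n+1)/(a+1))), which in turn is at most C'·n for a universal constant C'. -/
namespace SyncFormal

-- Auxiliary lemmas for Statement 7

private lemma zrbAux_nil (z : ℕ) :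
    zeroRunBitsAux z [] = if z = 0 then 0 else 2 * Nat.log 2 z + 2 := rfl

private lemma zrbAux_zero (z : ℕ) (rest : List ℕ) :
    zeroRunBitsAux z (0 :: rest) = zeroRunBitsAux (z + 1) rest := rfl

private lemma zrbAux_succ (z x : ℕ) (rest : List ℕ) :
    zeroRunBitsAux z ((x + 1) :: rest) =
      (if z = 0 then 0 else 2 * Nat.log 2 z + 2) + zeroRunBitsAux 0 rest := rfl

private lemma zrbAux_replicate (m z : ℕ) :
    zeroRunBitsAux z (List.replicate m 0) =
      if z + m = 0 then 0 else 2 * Nat.log 2 (z + m) + 2 := by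
  induction m generalizing z with
  | zero => simp [zrbAux_nil]
  | succ m ih =>
      rw [List.replicate_succ, zrbAux_zero, ih, show z + 1 + m = z + (m + 1) by omega]

private lemma zrbAux_repl_cons (m x : ℕ) (hx : x ≠ 0) (rest : List ℕ) (z : ℕ) :
    zeroRunBitsAux z (List.replicate m 0 ++ x :: rest) =
      (if z + m = 0 then 0 else 2 * Nat.log 2 (z + m) + 2) + zeroRunBitsAux 0 rest := by
  induction m generalizing z with
  | zero =>
      obtain ⟨y, rfl⟩ := Nat.exists_eq_succ_of_ne_zero hx
      simp [zrbAux_succ]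
  | succ m ih =>
      rw [List.replicate_succ, List.cons_append, zrbAux_zero, ih,
        show z + 1 + m = z + (m + 1) by omega]

private lemma idx_step (a : ℕ) (idx : ℕ → ℤ) (h : ∀ j : ℕ, j ≤ a → idx j < idx (j + 1)) :
    ∀ q : ℕ, q ≤ a + 1 → ∀ p : ℕ, p ≤ q → idx p + ((q - p : ℕ) : ℤ) ≤ idx q := by
  intro q
  induction q with
  | zero => intro _ p hp; have hp0 : p = 0 := Nat.le_zero.mp hp; simp [hp0]
  | succ q ih =>
      intro hq p hp
      rcases Nat.lt_or_ge p (q + 1) with h' | h'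
      · have h1 := ih (by omega) p (by omega)
        have h2 := h q (by omega)
        omega
      · have hpq : p = q + 1 := by omega
        subst hpq; simp

private lemma zrb_main : ∀ (a : ℕ) (A : List ℕ) (idx : ℕ → ℤ),
    idx 0 = -1 → idx (a + 1) = (A.length : ℤ) →
    (∀ j : ℕ, j ≤ a → idx j < idx (j + 1)) →
    (∀ j : ℕ, 1 ≤ j → j ≤ a → ∃ k : ℕ, idx j = (k : ℤ) ∧ k < A.length ∧ A.getD k 0 ≠ 0) →
    (∀ k : ℕ, k < A.length → A.getD k 0 ≠ 0 → ∃ j : ℕ, 1 ≤ j ∧ j ≤ a ∧ idx j = (k : ℤ)) →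
    zeroRunBits A ≤
      2 * a + 2 + ∑ j ∈ Finset.range (a + 1), 2 * Nat.log 2 (idx (j + 1) - idx j).toNat := by
  intro a
  induction a with
  | zero =>
      intro A idx h0 hlast hmono hnz hz
      have hA : A = List.replicate A.length 0 := by
        apply List.eq_replicate_of_mem
        intro b hb
        by_contra hb0
        obtain ⟨i, hi, rfl⟩ := List.mem_iff_getElem.mp hb
        have hgd : A.getD i 0 ≠ 0 := by rw [List.getD_eq_getElem _ _ hi]; exact hb0
        obtain ⟨j, hj1, hj0, _⟩ := hz i hi hgd
        omega
      have hlast' : idx 1 = (A.length : ℤ) := by simpa using hlast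
      have hgap : ((idx 1 - idx 0).toNat) = A.length + 1 := by omega
      rw [zeroRunBits]
      conv_lhs => rw [hA]
      rw [zrbAux_replicate, Finset.sum_range_one, hgap]
      simp only [Nat.zero_add]
      split
      · omega
      · have := Nat.log_mono_right (b := 2) (by omega : A.length ≤ A.length + 1)
        omega
  | succ a ih =>
      intro A idx h0 hlast hmono hnz hz
      obtain ⟨k₁, hk1, hk1n, hk1nz⟩ := hnz 1 le_rfl (by omega)
      set A' := A.drop (k₁ + 1) with hA'def
      have hlenA' : A'.length = A.length - (k₁ + 1) := by simp [hA'def]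
      have hmonoall := idx_step (a + 1) idx hmono
      have hgetD' : ∀ m : ℕ, A'.getD m 0 = A.getD (k₁ + 1 + m) 0 := by
        intro m
        simp [hA'def, List.getD_eq_getElem?_getD, List.getElem?_drop]
      have htake : A.take k₁ = List.replicate k₁ 0 := by
        have h1 : ∀ b ∈ A.take k₁, b = 0 := by
          intro b hb
          obtain ⟨i, hi, rfl⟩ := List.mem_iff_getElem.mp hb
          have hik : i < k₁ := by
            have := hi; rw [List.length_take] at this; omega
          have hiA : i < A.length := by
            have := hi; rw [List.length_take] at this; omega
          by_contra hb0
          have hgd : A.getD i 0 ≠ 0 := by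
            rw [List.getD_eq_getElem _ _ hiA]
            intro heq
            exact hb0 (by rw [List.getElem_take]; exact heq)
          obtain ⟨j, hj1, hj2, hjk⟩ := hz i hiA hgd
          have := hmonoall j (by omega) 1 hj1
          omega
        have h2 := List.eq_replicate_of_mem h1
        rw [h2, List.length_take]
        congr 1
        omega
      have hdecomp : A = List.replicate k₁ 0 ++ A.getD k₁ 0 :: A' := by
        conv_lhs => rw [← List.take_append_drop k₁ A]
        rw [htake, List.drop_eq_getElem_cons hk1n, List.getD_eq_getElem _ _ hk1n]
      have hxne : A.getD k₁ 0 ≠ 0 := hk1nz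
      set idx' : ℕ → ℤ := fun j => idx (j + 1) - (k₁ + 1) with hidx'
      have hIH := ih A' idx' (by simp [hidx']; omega)
        (by
          simp only [hidx', hlenA']
          have : k₁ + 1 ≤ A.length := hk1n
          omega)
        (by intro j hj; have := hmono (j + 1) (by omega); simp only [hidx']; omega)
        (by
          intro j hj1 hja
          obtain ⟨k, hk, hkn, hknz⟩ := hnz (j + 1) (by omega) (by omega)
          have hge := hmonoall (j + 1) (by omega) 1 (by omega)
          have hkge : k₁ + 1 ≤ k := by omega
          refine ⟨k - (k₁ + 1), by simp only [hidx']; omega, by omega, ?_⟩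
          rw [hgetD', show k₁ + 1 + (k - (k₁ + 1)) = k by omega]
          exact hknz)
        (by
          intro m hm hmnz
          rw [hgetD'] at hmnz
          have hkn : k₁ + 1 + m < A.length := by omega
          obtain ⟨j, hj1, hj2, hjk⟩ := hz (k₁ + 1 + m) hkn hmnz
          have hj2' : 2 ≤ j := by
            by_contra h'
            have hj1' : j = 1 := by omega
            rw [hj1', hk1] at hjk
            omega
          refine ⟨j - 1, by omega, by omega, ?_⟩
          simp only [hidx', show j - 1 + 1 = j by omega]
          omega)
      have hsum_eq : ∑ j ∈ Finset.range (a + 1), 2 * Nat.log 2 (idx' (j + 1) - idx' j).toNat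
          = ∑ j ∈ Finset.range (a + 1), 2 * Nat.log 2 (idx (j + 1 + 1) - idx (j + 1)).toNat := by
        refine Finset.sum_congr rfl fun j _ => ?_
        have h : idx' (j + 1) - idx' j = idx (j + 1 + 1) - idx (j + 1) := by
          simp only [hidx']; ring
        rw [h]
      rw [hsum_eq] at hIH
      rw [zeroRunBits]
      conv_lhs => rw [hdecomp]
      rw [zrbAux_repl_cons _ _ hxne]
      rw [Finset.sum_range_succ']
      rw [zeroRunBits] at hIH
      have hgap0 : (idx (0 + 1) - idx 0).toNat = k₁ + 1 := by
        simp only [Nat.zero_add]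
        omega
      rw [hgap0]
      have hcost : (if 0 + k₁ = 0 then 0 else 2 * Nat.log 2 (0 + k₁) + 2)
          ≤ 2 * Nat.log 2 (k₁ + 1) + 2 := by
        simp only [Nat.zero_add]
        split
        · omega
        · have := Nat.log_mono_right (b := 2) (by omega : k₁ ≤ k₁ + 1)
          omega
      omega

private lemma analytic1 (n a : ℕ) (g : ℕ → ℕ)
    (hg1 : ∀ j ∈ Finset.range (a + 1), 1 ≤ g j)
    (hgsum : ∑ j ∈ Finset.range (a + 1), (g j : ℝ) = (n : ℝ) + 1) :
    ((2 * a + 2 + ∑ j ∈ Finset.range (a + 1), 2 * Nat.log 2 (g j) : ℕ) : ℝ)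
      ≤ 2 * ((a : ℝ) + 1) * (1 + Real.logb 2 (((n : ℝ) + 1) / ((a : ℝ) + 1))) := by
  have ha : (0 : ℝ) < (a : ℝ) + 1 := by positivity
  have hlog2 : (0 : ℝ) < Real.log 2 := Real.log_pos (by norm_num)
  have hconc : ConcaveOn ℝ (Set.Ioi 0) Real.log := strictConcaveOn_log_Ioi.concaveOn
  have hjen := hconc.le_map_sum (t := Finset.range (a + 1))
      (w := fun _ => 1 / ((a : ℝ) + 1)) (p := fun j => (g j : ℝ))
      (fun i _ => by positivity)
      (by simp [Finset.sum_const, Finset.card_range]; field_simp)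
      (fun i hi => by
        have := hg1 i hi
        simp only [Set.mem_Ioi]
        exact_mod_cast Nat.lt_of_lt_of_le Nat.zero_lt_one this)
  have hsum_eq : ∑ i ∈ Finset.range (a + 1), (1 / ((a : ℝ) + 1)) • (g i : ℝ)
      = ((n : ℝ) + 1) / ((a : ℝ) + 1) := by
    simp only [smul_eq_mul, ← Finset.mul_sum, hgsum]
    ring
  rw [hsum_eq] at hjen
  simp only [smul_eq_mul, ← Finset.mul_sum] at hjen
  have hjen2 : ∑ i ∈ Finset.range (a + 1), Real.log (g i)
      ≤ ((a : ℝ) + 1) * Real.log (((n : ℝ) + 1) / ((a : ℝ) + 1)) := by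
    rw [div_mul_eq_mul_div, one_mul, div_le_iff₀ ha] at hjen
    linarith [hjen]
  have hterm : ∀ j ∈ Finset.range (a + 1),
      (Nat.log 2 (g j) : ℝ) ≤ Real.log (g j) / Real.log 2 := by
    intro j hj
    have := Real.natLog_le_logb (g j) 2
    rwa [Real.logb] at this
  have hsumlog : ∑ j ∈ Finset.range (a + 1), (Nat.log 2 (g j) : ℝ)
      ≤ ((a : ℝ) + 1) * Real.logb 2 (((n : ℝ) + 1) / ((a : ℝ) + 1)) := by
    calc ∑ j ∈ Finset.range (a + 1), (Nat.log 2 (g j) : ℝ)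
        ≤ ∑ j ∈ Finset.range (a + 1), Real.log (g j) / Real.log 2 :=
          Finset.sum_le_sum hterm
      _ = (∑ j ∈ Finset.range (a + 1), Real.log (g j)) / Real.log 2 := by
          rw [Finset.sum_div]
      _ ≤ (((a : ℝ) + 1) * Real.log (((n : ℝ) + 1) / ((a : ℝ) + 1))) / Real.log 2 := by
          gcongr
      _ = ((a : ℝ) + 1) * Real.logb 2 (((n : ℝ) + 1) / ((a : ℝ) + 1)) := by
          rw [Real.logb]; ring
  push_cast
  have h2s : ∑ x ∈ Finset.range (a + 1), 2 * (Nat.log 2 (g x) : ℝ)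
      = 2 * ∑ x ∈ Finset.range (a + 1), (Nat.log 2 (g x) : ℝ) := by
    rw [Finset.mul_sum]
  rw [h2s]
  linarith [hsumlog]

private lemma analytic2 (n a : ℕ) (hn : 1 ≤ n) (han : a ≤ n) :
    2 * ((a : ℝ) + 1) * (1 + Real.logb 2 (((n : ℝ) + 1) / ((a : ℝ) + 1))) ≤ 12 * (n : ℝ) := by
  set x : ℝ := (a : ℝ) + 1 with hxdef
  set M : ℝ := (n : ℝ) + 1 with hMdef
  have hx : (1 : ℝ) ≤ x := by simp [hxdef]
  have hx0 : (0 : ℝ) < x := by linarith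
  have hxM : x ≤ M := by simp [hxdef, hMdef]; exact_mod_cast han
  have hM0 : (0 : ℝ) < M / x := by positivity
  have hlog : Real.log (M / x) ≤ M / x - 1 := Real.log_le_sub_one_of_pos hM0
  have hL0 : 0 ≤ Real.log (M / x) := Real.log_nonneg (by rw [le_div_iff₀ hx0]; linarith)
  have hc : (0.5 : ℝ) < Real.log 2 := by
    have := Real.log_two_gt_d9; linarith
  have hc0 : (0 : ℝ) < Real.log 2 := by linarith
  have h1 : x * Real.log (M / x) ≤ M - x := by
    have := mul_le_mul_of_nonneg_left hlog hx0.le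
    have hxx : x * (M / x - 1) = M - x := by field_simp
    linarith [hxx ▸ this]
  have h2 : x * Real.log (M / x) / Real.log 2 ≤ 2 * (M - x) := by
    rw [div_le_iff₀ hc0]
    nlinarith [mul_nonneg hx0.le hL0]
  have hrw : 2 * x * (1 + Real.logb 2 (M / x)) =
      2 * x + 2 * (x * Real.log (M / x) / Real.log 2) := by
    rw [Real.logb]; ring
  rw [hrw]
  have hn1 : (1 : ℝ) ≤ (n : ℝ) := by exact_mod_cast hn
  have hMn : M = (n : ℝ) + 1 := hMdef
  linarith

/-- Bound on the number of bits contributed by zero-run tokens to `⟨A⟩`,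
where `idx 1 < ⋯ < idx a` enumerate the non-zero positions of `A`, `idx 0 = −1`,
`idx (a+1) = n`. -/
theorem statement7 : ∃ C C' : ℝ, 0 < C ∧ 0 < C' ∧
    ∀ (n : ℕ) (A : List ℕ) (a : ℕ) (idx : ℕ → ℤ),
      1 ≤ n → A.length = n →
      idx 0 = -1 → idx (a + 1) = (n : ℤ) →
      (∀ j : ℕ, j ≤ a → idx j < idx (j + 1)) →
      (∀ j : ℕ, 1 ≤ j → j ≤ a → ∃ k : ℕ, idx j = (k : ℤ) ∧ k < n ∧ A.getD k 0 ≠ 0) →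
      (∀ k : ℕ, k < n → A.getD k 0 ≠ 0 → ∃ j : ℕ, 1 ≤ j ∧ j ≤ a ∧ idx j = (k : ℤ)) →
      (zeroRunBits A ≤
          2 * a + 2 + ∑ j ∈ Finset.range (a + 1), 2 * Nat.log 2 (idx (j + 1) - idx j).toNat) ∧
      (((2 * a + 2 +
            ∑ j ∈ Finset.range (a + 1), 2 * Nat.log 2 (idx (j + 1) - idx j).toNat : ℕ)) : ℝ)
          ≤ C * ((a : ℝ) + 1) * (1 + Real.logb 2 (((n : ℝ) + 1) / ((a : ℝ) + 1))) ∧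
      C * ((a : ℝ) + 1) * (1 + Real.logb 2 (((n : ℝ) + 1) / ((a : ℝ) + 1))) ≤ C' * (n : ℝ) := by
  refine ⟨2, 12, by norm_num, by norm_num, ?_⟩
  intro n A a idx hn hlen h0 hlast hmono hnz hz
  subst hlen
  have part1 := zrb_main a A idx h0 hlast hmono hnz hz
  have hstep := idx_step a idx hmono (a + 1) le_rfl 0 (by omega)
  have han : a ≤ A.length := by omega
  have hg1 : ∀ j ∈ Finset.range (a + 1), 1 ≤ (idx (j + 1) - idx j).toNat := by
    intro j hj
    have := hmono j (by have := Finset.mem_range.mp hj; omega)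
    omega
  have hsumZ : ∑ j ∈ Finset.range (a + 1), (((idx (j + 1) - idx j).toNat : ℤ))
      = (A.length : ℤ) + 1 := by
    have h1 : ∀ j ∈ Finset.range (a + 1),
        (((idx (j + 1) - idx j).toNat : ℤ)) = idx (j + 1) - idx j := by
      intro j hj
      have := hmono j (by have := Finset.mem_range.mp hj; omega)
      omega
    rw [Finset.sum_congr rfl h1, Finset.sum_range_sub (f := idx), hlast, h0]
    ring
  have hsumN : ∑ j ∈ Finset.range (a + 1), (idx (j + 1) - idx j).toNat = A.length + 1 := by
    exact_mod_cast hsumZ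
  have hgsumR : ∑ j ∈ Finset.range (a + 1), (((idx (j + 1) - idx j).toNat : ℝ))
      = (A.length : ℝ) + 1 := by
    exact_mod_cast hsumN
  refine ⟨part1, ?_, analytic2 A.length a hn han⟩
  exact analytic1 A.length a (fun j => (idx (j + 1) - idx j).toNat) hg1 hgsumR


end SyncFormal
end
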